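/- arXiv:1102.2337 — 3 statements merged into one kernel-verified Lean document; each statement's English description precedes it below -/
import Mathlib

section
/- The image of the set of p-ary bracketings with occurrence number n under the insertion-tuple map ST equals M(n,1,p), i.e., the set of weakly increasing n-tuples u of positive integers with u_i ≤ (p-1)(i-1)+1 for all i. -/
/-!
Read the prefix word of a `(q + 1)`-ary bracketing with a counter that starts at `1`, drops by `1`
at each `x` and rises by `q` at each `ω`: it stays positive and reaches `0` exactly at the end
(Łukasiewicz words), and every such word parses back into a bracketing. Just before the `i`-th
`ω` (from `0`) the counter is `1 + q i - k`, where `k` is the number of `x`'s read so far, so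
positivity is the bound `k + 1 ≤ q i + 1` on the `i`-th entry of `ST`; the entries increase since
`k` does. Conversely a tuple `u` with these bounds is `ST` of the word
`x^(u₀-1) ω x^(u₁-u₀) ω ⋯ ω x^(qn+1-u_(n-1))`, whose counter stays positive by the same computation.
-/

/-- p-ary bracketings: terms over one variable `x` with one p-ary operation symbol `ω`. -/
inductive Brack (p : ℕ) : Type
  | x : Brack p
  | node : (Fin p → Brack p) → Brack p

namespace Brack

/-- occurrence number: number of occurrences of ω -/
def occ {p : ℕ} : Brack p → ℕ
  | .x => 0
  | .node f => 1 + ∑ i, occ (f i)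

/-- length: number of occurrences of x -/
def len {p : ℕ} : Brack p → ℕ
  | .x => 1
  | .node f => ∑ i, len (f i)

/-- evaluation of a bracketing in a groupoid, variables enumerated left-to-right
starting at position `j`. -/
def evalFrom {p : ℕ} {A : Type*} (op : (Fin p → A) → A) (v : ℕ → A) :
    Brack p → ℕ → A
  | .x, j => v j
  | .node f, j =>
      op (fun i => evalFrom op v (f i)
        (j + ∑ k ∈ Finset.univ.filter (· < i), len (f k)))

/-- the term function induced by a bracketing -/
def eval {p : ℕ} {A : Type*} (op : (Fin p → A) → A) (t : Brack p) (v : ℕ → A) : A :=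
  evalFrom op v t 0

/-- prefix word of a bracketing: `true` codes ω, `false` codes x -/
def word {p : ℕ} : Brack p → List Bool
  | .x => [false]
  | .node f => true :: (List.ofFn (fun i => word (f i))).flatten

/-- auxiliary: scan a word, recording 1 + number of x's before each ω -/
def STaux : List Bool → ℕ → List ℕ
  | [], _ => []
  | true :: w, c => (c + 1) :: STaux w c
  | false :: w, c => STaux w (c + 1)

/-- insertion tuple of a bracketing: the i-th entry is one plus the number
of x's preceding the i-th occurrence of ω in the prefix notation -/
def ST {p : ℕ} (t : Brack p) : List ℕ := STaux (word t) 0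

/-- replace the i-th (0-based) occurrence of x in `t` by `s` -/
def replaceLeaf {p : ℕ} : Brack p → ℕ → Brack p → Brack p
  | .x, i, s => if i = 0 then s else .x
  | .node f, i, s => .node (fun j =>
      let off := ∑ k ∈ Finset.univ.filter (· < j), len (f k)
      if off ≤ i ∧ i < off + len (f j) then replaceLeaf (f j) (i - off) s else f j)

/-- β_i : insertion of ω x … x at the i-th (1-based) occurrence of x -/
def beta {p : ℕ} (i : ℕ) (t : Brack p) : Brack p :=
  replaceLeaf t (i - 1) (.node (fun _ => .x))

/-- left depth: depth of leftmost leaf (binary case) -/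
def dl : Brack 2 → ℕ
  | .x => 0
  | .node f => dl (f 0) + 1

/-- right depth: depth of rightmost leaf (binary case) -/
def dr : Brack 2 → ℕ
  | .x => 0
  | .node f => dr (f 1) + 1

/-- left factor of a binary bracketing -/
def leftF : Brack 2 → Brack 2
  | .x => .x
  | .node f => f 0

/-- whether a bracketing is the single variable x -/
def isX {p : ℕ} : Brack p → Bool
  | .x => true
  | .node _ => false

/-- number of pairs of eggs, i.e. subterm occurrences of ω x x (binary case) -/
def eggs : Brack 2 → ℕ
  | .x => 0
  | .node f => (if isX (f 0) && isX (f 1) then 1 else 0) + eggs (f 0) + eggs (f 1)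

end Brack

/-- generalized Catalan numbers -/
def genCat (p : ℕ) : ℕ → ℕ
  | 0 => 1
  | n + 1 =>
      ∑ v ∈ (Finset.Nat.antidiagonalTuple p n).attach, ∏ k : Fin p, genCat p (v.1 k)
  decreasing_by
    have hv := Finset.Nat.mem_antidiagonalTuple.mp v.2
    have hle : v.1 k ≤ n := by
      calc v.1 k ≤ ∑ i, v.1 i :=
            Finset.single_le_sum (fun i _ => Nat.zero_le _) (Finset.mem_univ k)
        _ = n := hv
    omega

/-- the set M(n,k,p) of weakly increasing n-tuples of positive integers
with u_i ≤ (p-1)(i-1)+k (here indices are 0-based) -/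
def Mset (n k p : ℕ) : Set (Fin n → ℕ) :=
  {u | (∀ i : Fin n, 1 ≤ u i ∧ u i ≤ (p - 1) * (i : ℕ) + k) ∧
    ∀ i j : Fin n, i ≤ j → u i ≤ u j}

namespace Brack

open List

/-- `w` is the concatenation of the prefix words of `m` bracketings of arity `q + 1`, recognised
by the Łukasiewicz counter `m`: the number of trees still to be read. -/
def IsForestWord (q : ℕ) : ℕ → List Bool → Prop
  | 0, w => w = []
  | _ + 1, [] => False
  | m + 1, false :: w => IsForestWord q m w
  | m + 1, true :: w => IsForestWord q (m + q + 1) w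

variable {q : ℕ}

theorem isForestWord_replicate_false (k : ℕ) : IsForestWord q k (replicate k false) := by
  induction k with
  | zero => rfl
  | succ k ih => exact ih

theorem IsForestWord.append {m k : ℕ} {a b : List Bool} (ha : IsForestWord q m a)
    (hb : IsForestWord q k b) : IsForestWord q (m + k) (a ++ b) := by
  induction a generalizing m with
  | nil =>
    cases m with
    | zero => simpa using hb
    | succ m => exact ha.elim
  | cons c a ih =>
    cases m with
    | zero => exact absurd ha (cons_ne_nil c a)
    | succ m =>
      cases c with
      | false => rw [Nat.add_right_comm]; exact ih ha
      | true =>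
        rw [show m + 1 + k = m + k + 1 by omega]
        show IsForestWord q (m + k + q + 1) (a ++ b)
        rw [show m + k + q + 1 = m + q + 1 + k by omega]
        exact ih ha

theorem isForestWord_flatten {ws : List (List Bool)} (h : ∀ u ∈ ws, IsForestWord q 1 u) :
    IsForestWord q ws.length ws.flatten := by
  induction ws with
  | nil => rfl
  | cons u ws ih =>
    rw [flatten_cons, length_cons, Nat.add_comm]
    exact (h u mem_cons_self).append (ih fun v hv => h v (mem_cons_of_mem u hv))

theorem isForestWord_word (t : Brack (q + 1)) : IsForestWord q 1 (word t) := by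
  induction t with
  | x => rfl
  | node f ih =>
    show IsForestWord q (0 + q + 1) (ofFn fun i => word (f i)).flatten
    simpa using isForestWord_flatten (ws := ofFn fun i => word (f i)) (forall_mem_ofFn_iff.mpr ih)

theorem IsForestWord.exists_forest {m : ℕ} {w : List Bool} (h : IsForestWord q m w) :
    ∃ ts : List (Brack (q + 1)), ts.length = m ∧ (ts.map word).flatten = w := by
  induction w generalizing m with
  | nil =>
    cases m with
    | zero => exact ⟨[], rfl, rfl⟩
    | succ m => exact h.elim
  | cons c w ih =>
    cases m with
    | zero => exact absurd h (cons_ne_nil c w)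
    | succ m =>
      cases c with
      | false =>
        obtain ⟨ts, hlen, hw⟩ := ih h
        exact ⟨x :: ts, by simp [hlen], by simp [hw, word]⟩
      | true =>
        obtain ⟨ts, hlen, hw⟩ := ih h
        -- the first `q + 1` trees become the children of a new root
        have hchildren : (ofFn fun i : Fin (q + 1) => word ts[i]) = (ts.take (q + 1)).map word :=
          ext_getElem (by simp; omega) fun i _ _ => by
            simp only [List.getElem_ofFn, getElem_map, getElem_take, Fin.getElem_fin]
        refine ⟨node (fun i : Fin (q + 1) => ts[i]) :: ts.drop (q + 1), by simp; omega, ?_⟩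
        rw [map_cons, flatten_cons, word, hchildren, cons_append, ← flatten_append, ← map_append,
          take_append_drop, hw]

theorem IsForestWord.exists_word_eq {w : List Bool} (h : IsForestWord q 1 w) :
    ∃ t : Brack (q + 1), word t = w := by
  obtain ⟨ts, hlen, hw⟩ := h.exists_forest
  obtain ⟨t, rfl⟩ := length_eq_one_iff.mp hlen
  exact ⟨t, by simpa using hw⟩

theorem length_STaux (w : List Bool) (c : ℕ) : (STaux w c).length = w.count true := by
  induction w generalizing c with
  | nil => rfl
  | cons b w ih => cases b <;> simp [STaux, ih]

theorem lt_of_mem_STaux {w : List Bool} {c x : ℕ} (hx : x ∈ STaux w c) : c < x := by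
  induction w generalizing c with
  | nil => simp [STaux] at hx
  | cons b w ih =>
    cases b with
    | false => exact Nat.lt_of_succ_lt (ih hx)
    | true =>
      rcases mem_cons.mp hx with rfl | hx
      · exact Nat.lt_succ_self c
      · exact ih hx

theorem pairwise_STaux (w : List Bool) (c : ℕ) : (STaux w c).Pairwise (· ≤ ·) := by
  induction w generalizing c with
  | nil => exact Pairwise.nil
  | cons b w ih =>
    cases b with
    | false => exact ih (c + 1)
    | true => exact pairwise_cons.mpr ⟨fun x hx => lt_of_mem_STaux hx, ih c⟩

theorem IsForestWord.STaux_getElem_le {m : ℕ} {w : List Bool} (h : IsForestWord q m w) (c i : ℕ)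
    (hi : i < (STaux w c).length) : (STaux w c)[i] ≤ c + m + q * i := by
  induction w generalizing c m i with
  | nil => simp [STaux] at hi
  | cons b w ih =>
    cases m with
    | zero => exact absurd h (cons_ne_nil b w)
    | succ m =>
      cases b with
      | false =>
        have := ih h (c + 1) i hi
        simp only [STaux] at this ⊢
        omega
      | true =>
        cases i with
        | zero => simp [STaux]
        | succ i =>
          have := ih h c i (by simpa [STaux] using hi)
          simp only [STaux, getElem_cons_succ]
          rw [Nat.mul_succ]
          omega

theorem STaux_replicate_false_append (k : ℕ) (w : List Bool) (c : ℕ) :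
    STaux (replicate k false ++ w) c = STaux w (c + k) := by
  induction k generalizing c with
  | zero => rfl
  | succ k ih => rw [replicate_succ, cons_append, STaux, ih]; ac_rfl

theorem count_true_word {p : ℕ} (t : Brack p) : (word t).count true = occ t := by
  induction t with
  | x => rfl
  | node f ih => simp [word, occ, count_flatten, sum_ofFn, ih, Nat.add_comm]

theorem length_ST {p : ℕ} (t : Brack p) : (ST t).length = occ t := by
  rw [ST, length_STaux, count_true_word]

theorem ST_getElem_le (t : Brack (q + 1)) (i : ℕ) (hi : i < (ST t).length) :
    (ST t)[i] ≤ q * i + 1 := by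
  have := (isForestWord_word t).STaux_getElem_le 0 i hi
  exact this.trans_eq (Nat.add_comm _ _)

/-- The prefix word whose scan `STaux _ c` is `l`, padded with leaves up to `T` leaves in all. -/
def wordOfST (T : ℕ) : List ℕ → ℕ → List Bool
  | [], c => replicate (T - c) false
  | u :: l, c => replicate (u - 1 - c) false ++ true :: wordOfST T l (u - 1)

theorem STaux_wordOfST (T : ℕ) {l : List ℕ} {c : ℕ} (hl : l.Pairwise (· ≤ ·))
    (hc : ∀ x ∈ l, c < x) : STaux (wordOfST T l c) c = l := by
  induction l generalizing c with
  | nil => simpa [wordOfST, STaux] using STaux_replicate_false_append (T - c) [] c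
  | cons u l ih =>
    obtain ⟨hu, hl⟩ := pairwise_cons.mp hl
    have hcu := hc u mem_cons_self
    rw [wordOfST, STaux_replicate_false_append, STaux, Nat.add_sub_cancel' (by omega),
      Nat.sub_add_cancel (by omega), ih hl fun x hx => by have := hu x hx; omega]

theorem isForestWord_wordOfST {l : List ℕ} {c d m : ℕ} (hl : l.Pairwise (· ≤ ·))
    (hc : ∀ x ∈ l, c < x) (hbound : ∀ (i : ℕ) (hi : i < l.length), l[i] ≤ q * (d + i) + 1)
    (hm : c + m = q * d + 1) :
    IsForestWord q m (wordOfST (q * (d + l.length) + 1) l c) := by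
  induction l generalizing c d m with
  | nil => simpa [wordOfST, ← hm] using isForestWord_replicate_false (q := q) m
  | cons u l ih =>
    obtain ⟨hu, hl⟩ := pairwise_cons.mp hl
    have hcu := hc u mem_cons_self
    have hu_le : u ≤ q * d + 1 := hbound 0 (by simp)
    have hrest : IsForestWord q (m - (u - 1 - c) - 1 + q + 1)
        (wordOfST (q * (d + (l.length + 1)) + 1) l (u - 1)) := by
      rw [show d + (l.length + 1) = d + 1 + l.length by omega]
      refine ih hl (fun x hx => by have := hu x hx; omega) (fun i hi => ?_) ?_
      · rw [show d + 1 + i = d + (i + 1) by omega]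
        exact hbound (i + 1) (Nat.succ_lt_succ hi)
      · rw [Nat.mul_succ]
        omega
    rw [wordOfST, show m = (u - 1 - c) + (m - (u - 1 - c) - 1 + 1) by omega]
    exact (isForestWord_replicate_false _).append hrest

theorem exists_ST_eq {l : List ℕ} (hl : l.Pairwise (· ≤ ·))
    (hbound : ∀ (i : ℕ) (hi : i < l.length), 1 ≤ l[i] ∧ l[i] ≤ q * i + 1) :
    ∃ t : Brack (q + 1), ST t = l := by
  have hpos : ∀ x ∈ l, 0 < x := by
    intro x hx
    obtain ⟨i, hi, rfl⟩ := getElem_of_mem hx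
    exact (hbound i hi).1
  have hword := isForestWord_wordOfST hl hpos (d := 0) (m := 1)
    (fun i hi => by simpa using (hbound i hi).2) rfl
  obtain ⟨t, ht⟩ := hword.exists_word_eq
  exact ⟨t, by rw [ST, ht, STaux_wordOfST _ hl hpos]⟩

end Brack

theorem stmt_8 (p : ℕ) (hp : 2 ≤ p) (n : ℕ) :
    Brack.ST '' {t : Brack p | Brack.occ t = n} =
      {l : List ℕ | l.length = n ∧ l.Pairwise (· ≤ ·) ∧
        ∀ (i : ℕ) (h : i < l.length), 1 ≤ l.get ⟨i, h⟩ ∧ l.get ⟨i, h⟩ ≤ (p - 1) * i + 1} := by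
  obtain ⟨q, rfl⟩ : ∃ q, p = q + 1 := ⟨p - 1, by omega⟩
  ext l
  simp only [Set.mem_image, Set.mem_ofPred_eq, List.get_eq_getElem, Nat.add_sub_cancel]
  constructor
  · rintro ⟨t, rfl, rfl⟩
    refine ⟨Brack.length_ST t, Brack.pairwise_STaux _ _, fun i hi => ⟨?_, Brack.ST_getElem_le t i hi⟩⟩
    exact Brack.lt_of_mem_STaux (List.getElem_mem hi)
  · rintro ⟨rfl, hl, hbound⟩
    obtain ⟨t, rfl⟩ := Brack.exists_ST_eq hl hbound
    exact ⟨t, (Brack.length_ST t).symm, rfl⟩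
end

section
/- For every binary groupoid A and every n ≥ 2: if all bracketings with n occurrences of the operation induce the same term function on A, then for every m ≥ n, all bracketings with m occurrences induce the same term function (final associativity). -/
/-! Every bracketing with `m ≥ n` operations induces the same term function as the left comb
`leftComb m = (⋯((x x) x)⋯) x`; this goes by strong induction on `m`. Suppose `t` has `m + 1 > n`
operations. If the right spine of `t` has at most `n` operations, then `t` is a substitution instance
of a bracketing `s` with `n` operations that contains this spine, so the rightmost leaf of `s` is
still a leaf of `t`. Term identities are stable under substitution, so `s` may be replaced by
`leftComb n = u x`, which turns `t` into some `u' x` with `u'` having `m` operations, and the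
induction hypothesis applies to `u'`. If the right spine is longer, then `t = l r` where `r` has at
least `n` operations. By induction `r` may be replaced by a left comb, which brings the right spine
of `t` down to `2 ≤ n` operations. -/

namespace Brack

@[elab_as_elim]
theorem induction_two {motive : Brack 2 → Prop} (x : motive .x)
    (node : ∀ l r, motive l → motive r → motive (.node ![l, r])) (t : Brack 2) : motive t := by
  induction t with
  | x => exact x
  | node f ih =>
    rw [show f = ![f 0, f 1] from List.ofFn_inj.mp rfl]
    exact node _ _ (ih 0) (ih 1)

theorem occ_node_two (l r : Brack 2) : occ (.node ![l, r]) = 1 + (l.occ + r.occ) := by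
  simp [occ]

theorem len_node_two (l r : Brack 2) : len (.node ![l, r]) = l.len + r.len := by
  simp [len]

theorem dr_node_two (l r : Brack 2) : dr (.node ![l, r]) = r.dr + 1 := rfl

theorem len_eq_occ_add_one (t : Brack 2) : t.len = t.occ + 1 := by
  induction t using induction_two with
  | x => rfl
  | node l r hl hr => rw [len_node_two, occ_node_two, hl, hr]; ring

theorem dr_le_occ (t : Brack 2) : t.dr ≤ t.occ := by
  induction t using induction_two with
  | x => exact le_rfl
  | node l r _ hr => rw [dr_node_two, occ_node_two]; omega

def subst : Brack 2 → (ℕ → Brack 2) → Brack 2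
  | .x, σ => σ 0
  | .node f, σ => .node ![subst (f 0) σ, subst (f 1) (fun j => σ ((f 0).len + j))]

theorem subst_node_two (l r : Brack 2) (σ : ℕ → Brack 2) :
    subst (.node ![l, r]) σ = .node ![subst l σ, subst r (fun j => σ (l.len + j))] := rfl

theorem subst_congr (t : Brack 2) {σ σ' : ℕ → Brack 2} (h : ∀ i < t.len, σ i = σ' i) :
    subst t σ = subst t σ' := by
  induction t using induction_two generalizing σ σ' with
  | x => exact h 0 (by simp [len])
  | node l r hl hr =>
    rw [len_node_two] at h
    rw [subst_node_two, subst_node_two, hl fun i hi => h i (by omega),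
      hr fun i hi => h _ (by omega)]

theorem subst_node_append (s₀ s₁ : Brack 2) (σ₀ σ₁ : ℕ → Brack 2) :
    subst (.node ![s₀, s₁]) (fun i => if i < s₀.len then σ₀ i else σ₁ (i - s₀.len)) =
      .node ![subst s₀ σ₀, subst s₁ σ₁] := by
  rw [subst_node_two, subst_congr s₀ fun i hi => if_pos hi,
    subst_congr s₁ (σ' := σ₁) fun i _ => by simp]

theorem len_subst (t : Brack 2) (σ : ℕ → Brack 2) :
    (subst t σ).len = ∑ i ∈ Finset.range t.len, (σ i).len := by
  induction t using induction_two generalizing σ with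
  | x => simp [subst, len]
  | node l r hl hr => rw [subst_node_two, len_node_two, len_node_two, hl, hr, Finset.sum_range_add]

theorem occ_subst (t : Brack 2) (σ : ℕ → Brack 2) :
    (subst t σ).occ = t.occ + ∑ i ∈ Finset.range t.len, (σ i).occ := by
  induction t using induction_two generalizing σ with
  | x => simp [subst, occ, len]
  | node l r hl hr =>
    rw [subst_node_two, occ_node_two, occ_node_two, len_node_two, hl, hr, Finset.sum_range_add]
    ring

theorem occ_subst_eq_of_occ_eq {s s' : Brack 2} (h : s.occ = s'.occ) (σ : ℕ → Brack 2) :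
    (subst s σ).occ = (subst s' σ).occ := by
  rw [occ_subst, occ_subst, len_eq_occ_add_one, len_eq_occ_add_one, h]

/-- `σ a` is the tree that `subst s σ` puts at the rightmost leaf of `s`. -/
theorem exists_subst_eq (t : Brack 2) {a : ℕ} (ha : a ≤ t.occ) :
    ∃ s σ, s.occ = a ∧ subst s σ = t ∧ (t.dr ≤ a → σ a = .x) := by
  induction t using induction_two generalizing a with
  | x => exact ⟨.x, fun _ => .x, (Nat.le_zero.mp ha).symm, rfl, fun _ => rfl⟩
  | node l r hl hr =>
    rw [occ_node_two] at ha
    rcases a with _ | a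
    · exact ⟨.x, fun _ => .node ![l, r], rfl, rfl, by simp [dr_node_two]⟩
    have := dr_le_occ r
    set a₁ := min a (max r.dr (a - l.occ))
    obtain ⟨s₀, σ₀, hs₀, rfl, -⟩ := hl (a := a - a₁) (by omega)
    obtain ⟨s₁, σ₁, hs₁, rfl, hσ₁⟩ := hr (a := a₁) (by omega)
    refine ⟨.node ![s₀, s₁], _, by rw [occ_node_two]; omega, subst_node_append .., ?_⟩
    intro hdr
    rw [dr_node_two] at hdr
    have hlen : s₀.len = a - a₁ + 1 := by rw [len_eq_occ_add_one, hs₀]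
    simp only [show ¬a + 1 < s₀.len by omega, if_false]
    rw [show a + 1 - s₀.len = a₁ by omega]
    exact hσ₁ (by omega)

def leftComb : ℕ → Brack 2
  | 0 => .x
  | k + 1 => .node ![leftComb k, .x]

theorem occ_leftComb (k : ℕ) : (leftComb k).occ = k := by
  induction k with
  | zero => rfl
  | succ k ih => rw [leftComb, occ_node_two, ih]; simp [occ]; omega

theorem dr_leftComb_le_one (k : ℕ) : (leftComb k).dr ≤ 1 := by
  cases k <;> simp [leftComb, dr_node_two, dr]

theorem subst_leftComb_succ (k : ℕ) (σ : ℕ → Brack 2) :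
    subst (leftComb (k + 1)) σ = .node ![subst (leftComb k) σ, σ (k + 1)] := by
  rw [leftComb, subst_node_two, len_eq_occ_add_one, occ_leftComb]
  rfl

theorem evalFrom_eq_eval {p : ℕ} {A : Type*} (op : (Fin p → A) → A) (t : Brack p)
    (v : ℕ → A) (j : ℕ) : evalFrom op v t j = eval op t (fun i => v (j + i)) := by
  induction t generalizing v j with
  | x => simp [eval, evalFrom]
  | node f ih =>
    simp only [eval, evalFrom]
    congr 1
    funext i
    conv_lhs => rw [ih]
    conv_rhs => rw [ih]
    simp only [zero_add, add_assoc]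

section Evaluation

variable {A : Type*} (op : (Fin 2 → A) → A)

theorem eval_node_two (l r : Brack 2) (v : ℕ → A) :
    eval op (.node ![l, r]) v = op ![eval op l v, eval op r (fun i => v (l.len + i))] := by
  change op _ = op _
  congr 1
  funext i
  fin_cases i <;> simp [evalFrom_eq_eval, Finset.filter_eq']

theorem eval_subst (t : Brack 2) (σ : ℕ → Brack 2) (v : ℕ → A) :
    eval op (subst t σ) v =
      eval op t (fun i => eval op (σ i) (fun k => v (∑ j ∈ Finset.range i, (σ j).len + k))) := by
  induction t using induction_two generalizing σ v with
  | x => simp [subst, eval, evalFrom]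
  | node l r hl hr =>
    rw [subst_node_two, eval_node_two, eval_node_two, hl, hr, len_subst]
    simp only [Finset.sum_range_add, add_assoc]

variable {op}

theorem eval_node_congr {l l' r r' : Brack 2} (hl : eval op l = eval op l')
    (hlen : l.len = l'.len) (hr : eval op r = eval op r') :
    eval op (.node ![l, r]) = eval op (.node ![l', r']) := by
  funext v
  rw [eval_node_two, eval_node_two, hl, hr, hlen]

theorem eval_subst_congr {s s' : Brack 2} (h : eval op s = eval op s') (σ : ℕ → Brack 2) :
    eval op (subst s σ) = eval op (subst s' σ) := by
  funext v
  rw [eval_subst, eval_subst, h]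

def IsAssociativeAt (op : (Fin 2 → A) → A) (n : ℕ) : Prop :=
  ∀ s t : Brack 2, s.occ = n → t.occ = n → eval op s = eval op t

theorem IsAssociativeAt.eval_eq_leftComb_of_dr_le {n m : ℕ} (h : IsAssociativeAt op (n + 1))
    (hnm : n ≤ m) (ih : ∀ t : Brack 2, t.occ = m → eval op t = eval op (leftComb m))
    {t : Brack 2} (ht : t.occ = m + 1) (hdr : t.dr ≤ n + 1) :
    eval op t = eval op (leftComb (m + 1)) := by
  obtain ⟨s, σ, hs, rfl, hσ⟩ := exists_subst_eq t (a := n + 1) (by omega)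
  have hocc : (subst (leftComb n) σ).occ = m := by
    rw [occ_subst_eq_of_occ_eq (hs.trans (occ_leftComb _).symm), subst_leftComb_succ,
      hσ hdr, occ_node_two] at ht
    simp only [occ] at ht
    omega
  calc eval op (subst s σ) = eval op (subst (leftComb (n + 1)) σ) :=
        eval_subst_congr (h _ _ hs (occ_leftComb _)) σ
    _ = eval op (.node ![subst (leftComb n) σ, .x]) := by rw [subst_leftComb_succ, hσ hdr]
    _ = eval op (leftComb (m + 1)) :=
        eval_node_congr (ih _ hocc) (by rw [len_eq_occ_add_one, len_eq_occ_add_one, hocc,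
          occ_leftComb]) rfl

theorem IsAssociativeAt.eval_eq_leftComb {n : ℕ} (hn : 2 ≤ n) (h : IsAssociativeAt op n) :
    ∀ m, n ≤ m → ∀ t : Brack 2, t.occ = m → eval op t = eval op (leftComb m) := by
  intro m
  induction m using Nat.strong_induction_on with
  | _ m ih =>
  intro hm t ht
  rcases hm.eq_or_lt with rfl | hlt
  · exact h _ _ ht (occ_leftComb _)
  obtain ⟨n, rfl⟩ : ∃ k, n = k + 1 := ⟨n - 1, by omega⟩
  obtain ⟨m, rfl⟩ : ∃ k, m = k + 1 := ⟨m - 1, by omega⟩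
  have step : ∀ t : Brack 2, t.occ = m + 1 → t.dr ≤ n + 1 →
      eval op t = eval op (leftComb (m + 1)) := fun _ =>
    h.eval_eq_leftComb_of_dr_le (by omega) (ih m (by omega) (by omega))
  by_cases hdr : t.dr ≤ n + 1
  · exact step t ht hdr
  induction t using induction_two with
  | x => simp [dr] at hdr
  | node l r =>
    rw [dr_node_two] at hdr
    rw [occ_node_two] at ht
    have := dr_le_occ r
    calc eval op (.node ![l, r]) = eval op (.node ![l, leftComb r.occ]) :=
          eval_node_congr rfl rfl (ih _ (by omega) (by omega) r rfl)
      _ = eval op (leftComb (m + 1)) := by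
        refine step _ (by rw [occ_node_two, occ_leftComb]; omega) ?_
        rw [dr_node_two]
        linarith [dr_leftComb_le_one r.occ]

theorem IsAssociativeAt.of_le {n m : ℕ} (hn : 2 ≤ n) (h : IsAssociativeAt op n) (hm : n ≤ m) :
    IsAssociativeAt op m := fun s t hs ht =>
  (h.eval_eq_leftComb hn m hm s hs).trans (h.eval_eq_leftComb hn m hm t ht).symm

end Evaluation

end Brack

theorem stmt_13 (A : Type*) (op : (Fin 2 → A) → A) (n : ℕ) (hn : 2 ≤ n)
    (h : ∀ s t : Brack 2, Brack.occ s = n → Brack.occ t = n →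
      ∀ v : ℕ → A, Brack.eval op s v = Brack.eval op t v) :
    ∀ (m : ℕ), n ≤ m → ∀ s t : Brack 2, Brack.occ s = m → Brack.occ t = m →
      ∀ v : ℕ → A, Brack.eval op s v = Brack.eval op t v := fun _ hm s t hs ht =>
  congrFun (Brack.IsAssociativeAt.of_le hn (fun s t hs ht => funext (h s t hs ht)) hm s t hs ht)
end

section
/- In the 4-element groupoid A = ({0,1,2,3}, ·) with multiplication table 0·y = 0; 1·0=0, 1·1=0, 1·2=0, 1·3=1; 2·0=0, 2·1=0, 2·2=1, 2·3=2; 3·0=0, 3·1=1, 3·2=2, 3·3=2, the maximal value attained by the term function of any binary bracketing s equals max(3 − e, 0), where e is the number of subterms of s of the form ω x x (pairs of eggs); in particular this maximum is attained when all arguments equal 3. -/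
/-- the multiplication table of the 4-element groupoid -/
def mulA : Fin 4 → Fin 4 → Fin 4 :=
  ![![0, 0, 0, 0], ![0, 0, 0, 1], ![0, 0, 1, 2], ![0, 1, 2, 2]]

def opA : (Fin 2 → Fin 4) → Fin 4 := fun v => mulA (v 0) (v 1)

/-!
Read an element `a` of the groupoid through its deficit `3 - a`. By the table, the deficit of a
product is at least `1` and at least the sum of the deficits of its factors, with equality in the
second bound except for `3 · 3 = 2`. So every pair of eggs `ω x x` raises the deficit by at least
one, every other node adds up the deficits of its two factors, and the deficit of the value is at
least the number of eggs. When all arguments are `3`, every step is an equality.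
-/

theorem mulA_val_le_two (a b : Fin 4) : (mulA a b).val ≤ 2 := by
  revert a b; decide

theorem mulA_val_le_add_sub_three (a b : Fin 4) : (mulA a b).val ≤ a.val + b.val - 3 := by
  revert a b; decide

theorem mulA_val_of_ne_three (a b : Fin 4) (h : a ≠ 3 ∨ b ≠ 3) :
    (mulA a b).val = a.val + b.val - 3 := by
  revert a b; decide

namespace Brack

theorem evalFrom_node_two {A : Type*} (op : (Fin 2 → A) → A) (v : ℕ → A)
    (f : Fin 2 → Brack 2) (j : ℕ) :
    evalFrom op v (.node f) j =
      op ![evalFrom op v (f 0) j, evalFrom op v (f 1) (j + (f 0).len)] := by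
  rw [evalFrom]
  congr 1
  funext i
  fin_cases i
  · simp
  · simp [Fin.lt_one_iff, Finset.filter_eq']

theorem evalFrom_opA_node (v : ℕ → Fin 4) (f : Fin 2 → Brack 2) (j : ℕ) :
    evalFrom opA v (.node f) j =
      mulA (evalFrom opA v (f 0) j) (evalFrom opA v (f 1) (j + (f 0).len)) := by
  rw [evalFrom_node_two]; rfl

theorem isX_iff {p : ℕ} {t : Brack p} : t.isX = true ↔ t = .x := by
  cases t <;> simp [isX]

theorem eggs_pos_of_ne_x {t : Brack 2} (ht : t ≠ .x) : 0 < t.eggs := by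
  induction t with
  | x => exact absurd rfl ht
  | node f ih =>
    by_cases h0 : f 0 = .x
    · by_cases h1 : f 1 = .x
      · simp [eggs, h0, h1, isX]
      · have := ih 1 h1; simp only [eggs]; omega
    · have := ih 0 h0; simp only [eggs]; omega

theorem eggs_node_of_eq_x {f : Fin 2 → Brack 2} (h0 : f 0 = .x) (h1 : f 1 = .x) :
    eggs (.node f) = 1 := by
  simp [eggs, h0, h1, isX]

theorem eggs_node_of_ne_x {f : Fin 2 → Brack 2} (hf : ¬(f 0 = .x ∧ f 1 = .x)) :
    eggs (.node f) = eggs (f 0) + eggs (f 1) ∧ 0 < eggs (f 0) + eggs (f 1) := by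
  have hX : ¬((f 0).isX = true ∧ (f 1).isX = true) := by simpa only [isX_iff] using hf
  refine ⟨by simp [eggs, hX], ?_⟩
  rcases not_and_or.mp hf with h | h <;>
  · have := eggs_pos_of_ne_x h
    omega

theorem val_evalFrom_opA_le (v : ℕ → Fin 4) (t : Brack 2) (j : ℕ) :
    (evalFrom opA v t j).val ≤ 3 - t.eggs := by
  induction t generalizing j with
  | x => exact (v j).is_le
  | node f ih =>
    rw [evalFrom_opA_node]
    by_cases hf : f 0 = .x ∧ f 1 = .x
    · rw [eggs_node_of_eq_x hf.1 hf.2]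
      exact mulA_val_le_two _ _
    · have h0 := ih 0 j
      have h1 := ih 1 (j + (f 0).len)
      have := mulA_val_le_add_sub_three (evalFrom opA v (f 0) j)
        (evalFrom opA v (f 1) (j + (f 0).len))
      rw [(eggs_node_of_ne_x hf).1]
      omega

theorem val_evalFrom_opA_three (t : Brack 2) (j : ℕ) :
    (evalFrom opA (fun _ => 3) t j).val = 3 - t.eggs := by
  induction t generalizing j with
  | x => rfl
  | node f ih =>
    rw [evalFrom_opA_node]
    by_cases hf : f 0 = .x ∧ f 1 = .x
    · rw [eggs_node_of_eq_x hf.1 hf.2, hf.1, hf.2]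
      rfl
    · obtain ⟨heggs, hpos⟩ := eggs_node_of_ne_x hf
      have h0 := ih 0 j
      have h1 := ih 1 (j + (f 0).len)
      have hne : evalFrom opA (fun _ => 3) (f 0) j ≠ 3 ∨
          evalFrom opA (fun _ => 3) (f 1) (j + (f 0).len) ≠ 3 := by
        by_contra! h
        rw [h.1] at h0
        rw [h.2] at h1
        change 3 = _ at h0 h1
        omega
      rw [mulA_val_of_ne_three _ _ hne, heggs]
      omega

end Brack

theorem stmt_19 (s : Brack 2) :
    (∀ v : ℕ → Fin 4, (Brack.eval opA s v).val ≤ 3 - Brack.eggs s) ∧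
    (Brack.eval opA s (fun _ => 3)).val = 3 - Brack.eggs s :=
  ⟨fun v => Brack.val_evalFrom_opA_le v s 0, Brack.val_evalFrom_opA_three s 0⟩
end
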